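/- Let A ∈ ℝ^{N×N} be symmetric with eigenvalues ordered by modulus |λ₀| ≥ |λ₁| ≥ … ≥ |λ_{N-1}|, λ₀ = ‖A‖₂ > |λ₁|, and rank(A) > 1. Then the optimal rank-1 Hankel approximation error λ̃ := min over rank-1 Hankel matrices H₁ of ‖A - H₁‖₂ satisfies |λ₁| ≤ λ̃ < λ₀. -/

import Mathlib

/-!
Lower bound: whatever `c` and `u`, some unit vector `x ∈ span {v₀, v₁}` is orthogonal to `u`;
there `A - c uuᵀ` acts as `A`, which stretches `x` by at least `|λ₁|`.

Upper bound: `z ↦ ⟨v₀, z_N⟩` is, up to a positive factor, a nonzero polynomial in `z`, so some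
`z` has `t := ⟨v₀, z_N⟩ ≠ 0`. Expanding in the eigenbasis, the quadratic form of
`A - ε z_N z_Nᵀ` on the unit sphere lies in `[-(|λ₁| + ε), λ₀ - ε t² / 2]`, and for
`ε = (λ₀ - |λ₁|) / 2` both bounds are `< λ₀` in absolute value. For a symmetric matrix the
quadratic form controls the spectral norm (polarization), so this perturbation beats `λ₀`.
-/

open Matrix

/-- Real normalized structured vector `(1, z, …, z^{N-1})ᵀ / ‖·‖₂`. -/
noncomputable def rzvec (N : ℕ) (z : ℝ) : Fin N → ℝ :=
  fun k => (Real.sqrt (∑ j : Fin N, z ^ (2 * (j : ℕ))))⁻¹ * z ^ (k : ℕ)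

/-- Last standard basis vector of `ℝ^N`. -/
def revec (N : ℕ) : Fin N → ℝ := fun k => if (k : ℕ) = N - 1 then 1 else 0

noncomputable def rvnorm {ι : Type*} [Fintype ι] (x : ι → ℝ) : ℝ :=
  Real.sqrt (∑ i, x i ^ 2)

/-- Spectral norm of a real matrix. -/
noncomputable def rspecNorm {M N : ℕ} (A : Matrix (Fin M) (Fin N) ℝ) : ℝ :=
  sSup {r : ℝ | ∃ x : Fin N → ℝ, rvnorm x = 1 ∧ r = rvnorm (A.mulVec x)}

open Finset

section DotProduct

variable {ι : Type*} [Fintype ι]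

lemma dotProduct_sq_le (x y : ι → ℝ) : (x ⬝ᵥ y) ^ 2 ≤ (x ⬝ᵥ x) * (y ⬝ᵥ y) := by
  simpa only [dotProduct, sq] using sum_mul_sq_le_sq_mul_sq univ x y

lemma sum_dotProduct_mul_dotProduct [DecidableEq ι] {v : ι → ι → ℝ}
    (horth : ∀ i j, v i ⬝ᵥ v j = if i = j then (1 : ℝ) else 0) (x y : ι → ℝ) :
    ∑ i, (v i ⬝ᵥ x) * (v i ⬝ᵥ y) = x ⬝ᵥ y := by
  set V : Matrix ι ι ℝ := Matrix.of v
  have hVVt : V * Vᵀ = 1 := by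
    ext i j
    simpa [V, Matrix.mul_apply, Matrix.one_apply, dotProduct] using horth i j
  calc ∑ i, (v i ⬝ᵥ x) * (v i ⬝ᵥ y) = (V *ᵥ x) ⬝ᵥ (V *ᵥ y) := rfl
    _ = ((Vᵀ * V) *ᵥ x) ⬝ᵥ y := by
      rw [dotProduct_mulVec, ← mulVec_transpose, mulVec_mulVec]
    _ = x ⬝ᵥ y := by rw [mul_eq_one_comm.mp hVVt, one_mulVec]

lemma dotProduct_mulVec_eq_mul_of_mulVec_eq_smul {A : Matrix ι ι ℝ} (hA : A.IsSymm)
    {u : ι → ℝ} {μ : ℝ} (hu : A *ᵥ u = μ • u) (x : ι → ℝ) : u ⬝ᵥ A *ᵥ x = μ * (u ⬝ᵥ x) := by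
  rw [dotProduct_mulVec, ← mulVec_transpose, hA.eq, hu, smul_dotProduct, smul_eq_mul]

lemma dotProduct_mulVec_self_eq_sum [DecidableEq ι] {A : Matrix ι ι ℝ} (hA : A.IsSymm)
    {lam : ι → ℝ} {v : ι → ι → ℝ} (heig : ∀ i, A *ᵥ v i = lam i • v i)
    (horth : ∀ i j, v i ⬝ᵥ v j = if i = j then (1 : ℝ) else 0) (x : ι → ℝ) :
    x ⬝ᵥ A *ᵥ x = ∑ i, lam i * (v i ⬝ᵥ x) ^ 2 := by
  rw [← sum_dotProduct_mul_dotProduct horth]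
  refine sum_congr rfl fun i _ => ?_
  rw [dotProduct_mulVec_eq_mul_of_mulVec_eq_smul hA (heig i)]
  ring

lemma mulVec_dotProduct_mulVec_le_of_abs_dotProduct_mulVec_le {B : Matrix ι ι ℝ} (hB : B.IsSymm)
    {M : ℝ} (h : ∀ x, |x ⬝ᵥ B *ᵥ x| ≤ M * (x ⬝ᵥ x)) (x : ι → ℝ) :
    B *ᵥ x ⬝ᵥ B *ᵥ x ≤ M ^ 2 * (x ⬝ᵥ x) := by
  have hsymm : x ⬝ᵥ B *ᵥ (B *ᵥ x) = B *ᵥ x ⬝ᵥ B *ᵥ x := by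
    rw [dotProduct_mulVec, ← mulVec_transpose, hB.eq, dotProduct_comm]
  -- polarization: `4 t ‖Bx‖² = q(x + t Bx) - q(x - t Bx) ≤ 2 M (‖x‖² + t² ‖Bx‖²)`
  have key : ∀ t : ℝ, 4 * t * (B *ᵥ x ⬝ᵥ B *ᵥ x) ≤
      2 * M * (x ⬝ᵥ x + t ^ 2 * (B *ᵥ x ⬝ᵥ B *ᵥ x)) := by
    intro t
    have h₁ := (abs_le.mp (h (x + t • B *ᵥ x))).2
    have h₂ := (abs_le.mp (h (x - t • B *ᵥ x))).1
    simp only [mulVec_add, mulVec_sub, mulVec_smul, dotProduct_add, add_dotProduct,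
      dotProduct_sub, sub_dotProduct, dotProduct_smul, smul_dotProduct, smul_eq_mul,
      hsymm, dotProduct_comm (B *ᵥ x) x] at h₁ h₂
    linarith
  have hxx : 0 ≤ x ⬝ᵥ x := Fintype.sum_nonneg fun i => mul_self_nonneg (x i)
  have hyy : 0 ≤ B *ᵥ x ⬝ᵥ B *ᵥ x := Fintype.sum_nonneg fun i => mul_self_nonneg _
  rcases le_or_gt M 0 with hM | hM
  · nlinarith [key 1]
  · have := key M⁻¹
    field_simp at this
    nlinarith

end DotProduct

section SpectralNorm

variable {m n : ℕ}

lemma rvnorm_eq_sqrt_dotProduct (x : Fin n → ℝ) : rvnorm x = √(x ⬝ᵥ x) := by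
  simp [rvnorm, dotProduct, sq]

lemma dotProduct_self_eq_one_of_rvnorm_eq_one {x : Fin n → ℝ} (hx : rvnorm x = 1) :
    x ⬝ᵥ x = 1 := by
  rwa [rvnorm_eq_sqrt_dotProduct, Real.sqrt_eq_one] at hx

lemma bddAbove_rvnorm_mulVec_unit (B : Matrix (Fin m) (Fin n) ℝ) :
    BddAbove {r : ℝ | ∃ x : Fin n → ℝ, rvnorm x = 1 ∧ r = rvnorm (B *ᵥ x)} := by
  refine ⟨√(∑ i, B i ⬝ᵥ B i), ?_⟩
  rintro _ ⟨x, hx, rfl⟩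
  rw [rvnorm_eq_sqrt_dotProduct]
  refine Real.sqrt_le_sqrt (sum_le_sum fun i _ => ?_)
  have := dotProduct_sq_le (B i) x
  rw [dotProduct_self_eq_one_of_rvnorm_eq_one hx, mul_one] at this
  rwa [← sq]

lemma rvnorm_mulVec_le_rspecNorm (B : Matrix (Fin m) (Fin n) ℝ) {x : Fin n → ℝ}
    (hx : rvnorm x = 1) : rvnorm (B *ᵥ x) ≤ rspecNorm B :=
  le_csSup (bddAbove_rvnorm_mulVec_unit B) ⟨x, hx, rfl⟩

lemma rspecNorm_le {B : Matrix (Fin m) (Fin n) ℝ} {R : ℝ} (hR : 0 ≤ R)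
    (h : ∀ x, rvnorm x = 1 → rvnorm (B *ᵥ x) ≤ R) : rspecNorm B ≤ R :=
  Real.sSup_le (by rintro _ ⟨x, hx, rfl⟩; exact h x hx) hR

lemma rspecNorm_le_of_abs_dotProduct_mulVec_le {B : Matrix (Fin n) (Fin n) ℝ} (hB : B.IsSymm)
    {M : ℝ} (hM : 0 ≤ M) (h : ∀ x, |x ⬝ᵥ B *ᵥ x| ≤ M * (x ⬝ᵥ x)) : rspecNorm B ≤ M := by
  refine rspecNorm_le hM fun x hx => ?_
  have := mulVec_dotProduct_mulVec_le_of_abs_dotProduct_mulVec_le hB h x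
  rw [dotProduct_self_eq_one_of_rvnorm_eq_one hx, mul_one] at this
  rw [rvnorm_eq_sqrt_dotProduct, Real.sqrt_le_left hM]
  exact this

end SpectralNorm

lemma abs_sum_mul_sq_sub_sq_le {ι : Type*} [Fintype ι] [DecidableEq ι] (lam a c : ι → ℝ) (i₀ : ι)
    {μ ε M : ℝ} (hlam₀ : 0 ≤ lam i₀) (hμ₀ : 0 ≤ μ) (hμ : ∀ i ≠ i₀, |lam i| ≤ μ)
    (hc : ∑ i, c i ^ 2 = 1) (hε : 0 ≤ ε) (hM₀ : lam i₀ - ε * c i₀ ^ 2 / 2 ≤ M) (hM₁ : μ + ε ≤ M) :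
    |∑ i, lam i * a i ^ 2 - ε * (∑ i, c i * a i) ^ 2| ≤ M * ∑ i, a i ^ 2 := by
  set E := univ.erase i₀
  have split (f : ι → ℝ) : ∑ i, f i = f i₀ + ∑ i ∈ E, f i := (add_sum_erase _ _ (mem_univ _)).symm
  set b := ∑ i ∈ E, a i ^ 2
  set r := ∑ i ∈ E, c i * a i
  have hb : 0 ≤ b := sum_nonneg fun i _ => sq_nonneg _
  have hcE : ∑ i ∈ E, c i ^ 2 ≤ 1 := by
    rw [split, add_comm] at hc; linarith [sq_nonneg (c i₀)]
  have hlamE : |∑ i ∈ E, lam i * a i ^ 2| ≤ μ * b := by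
    rw [mul_sum]
    refine (abs_sum_le_sum_abs _ _).trans (sum_le_sum fun i hi => ?_)
    rw [abs_mul, abs_sq]
    exact mul_le_mul_of_nonneg_right (hμ i (ne_of_mem_erase hi)) (sq_nonneg _)
  have hr : r ^ 2 ≤ b := (sum_mul_sq_le_sq_mul_sq E c a).trans (mul_le_of_le_one_left hb hcE)
  have hs : (∑ i, c i * a i) ^ 2 ≤ ∑ i, a i ^ 2 := by
    simpa [hc] using sum_mul_sq_le_sq_mul_sq univ c a
  rw [split (fun i => c i * a i), split (fun i => a i ^ 2)] at hs
  rw [split (fun i => lam i * a i ^ 2), split (fun i => c i * a i), split (fun i => a i ^ 2)]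
  rw [abs_le] at hlamE ⊢
  -- `(p + r)² ≥ p²/2 - r²`: the `i₀`-component of `c` pushes the form below `lam i₀`
  have hsq : c i₀ ^ 2 * a i₀ ^ 2 / 2 - r ^ 2 ≤ (c i₀ * a i₀ + r) ^ 2 := by
    nlinarith [sq_nonneg (c i₀ * a i₀ + 2 * r)]
  constructor <;> nlinarith [sq_nonneg (a i₀), mul_nonneg hε (sq_nonneg (c i₀ * a i₀ + r))]

section Eigenbasis

variable {n : ℕ} {A : Matrix (Fin n) (Fin n) ℝ} {lam : Fin n → ℝ} {v : Fin n → Fin n → ℝ}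

lemma rspecNorm_sub_smul_vecMulVec_le (hA : A.IsSymm) (heig : ∀ i, A *ᵥ v i = lam i • v i)
    (horth : ∀ i j, v i ⬝ᵥ v j = if i = j then (1 : ℝ) else 0) (i₀ : Fin n) {μ ε M : ℝ}
    (hlam₀ : 0 ≤ lam i₀) (hμ₀ : 0 ≤ μ) (hμ : ∀ i ≠ i₀, |lam i| ≤ μ) {w : Fin n → ℝ}
    (hw : w ⬝ᵥ w = 1) (hε : 0 ≤ ε) (hM₀ : lam i₀ - ε * (v i₀ ⬝ᵥ w) ^ 2 / 2 ≤ M)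
    (hM₁ : μ + ε ≤ M) : rspecNorm (A - ε • vecMulVec w w) ≤ M := by
  have hB : (A - ε • vecMulVec w w).IsSymm := hA.sub (IsSymm.smul (transpose_vecMulVec w w) ε)
  refine rspecNorm_le_of_abs_dotProduct_mulVec_le hB (hμ₀.trans (by linarith)) fun x => ?_
  have hform : x ⬝ᵥ (A - ε • vecMulVec w w) *ᵥ x = x ⬝ᵥ A *ᵥ x - ε * (w ⬝ᵥ x) ^ 2 := by
    simp only [sub_mulVec, smul_mulVec, vecMulVec_mulVec, dotProduct_sub, dotProduct_smul,
      MulOpposite.smul_eq_mul_unop, MulOpposite.unop_op, smul_eq_mul, dotProduct_comm x w, sq]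
  have hc : ∑ i, (v i ⬝ᵥ w) ^ 2 = 1 := by
    simpa [sq, hw] using sum_dotProduct_mul_dotProduct horth w w
  rw [hform, dotProduct_mulVec_self_eq_sum hA heig horth, ← sum_dotProduct_mul_dotProduct horth w,
    ← sum_dotProduct_mul_dotProduct horth x x]
  simpa [sq] using abs_sum_mul_sq_sub_sq_le lam (fun i => v i ⬝ᵥ x) (fun i => v i ⬝ᵥ w) i₀
    hlam₀ hμ₀ hμ hc hε hM₀ hM₁

lemma exists_rspecNorm_sub_smul_vecMulVec_lt (hA : A.IsSymm) (heig : ∀ i, A *ᵥ v i = lam i • v i)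
    (horth : ∀ i j, v i ⬝ᵥ v j = if i = j then (1 : ℝ) else 0) (i₀ : Fin n) {μ : ℝ}
    (hμ₀ : 0 ≤ μ) (hμ : ∀ i ≠ i₀, |lam i| ≤ μ) (hgap : μ < lam i₀) {w : Fin n → ℝ}
    (hw : w ⬝ᵥ w = 1) (ht : v i₀ ⬝ᵥ w ≠ 0) :
    ∃ ε : ℝ, rspecNorm (A - ε • vecMulVec w w) < lam i₀ := by
  set t := v i₀ ⬝ᵥ w
  have ht₁ : t ^ 2 ≤ 1 := by
    simpa [hw, horth] using dotProduct_sq_le (v i₀) w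
  have ht₀ : 0 < t ^ 2 := by positivity
  refine ⟨(lam i₀ - μ) / 2, (rspecNorm_sub_smul_vecMulVec_le hA heig horth i₀ (by linarith) hμ₀ hμ
    hw (by linarith) le_rfl ?_).trans_lt ?_⟩
  · nlinarith
  · nlinarith

end Eigenbasis

lemma exists_sq_add_sq_eq_one_and_mul_add_mul_eq_zero (s t : ℝ) :
    ∃ a b : ℝ, a ^ 2 + b ^ 2 = 1 ∧ a * s + b * t = 0 := by
  rcases eq_or_ne (s ^ 2 + t ^ 2) 0 with h | h
  · have hs : s = 0 := by nlinarith [sq_nonneg s, sq_nonneg t]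
    exact ⟨1, 0, by norm_num, by simp [hs]⟩
  · have hpos : 0 < s ^ 2 + t ^ 2 := lt_of_le_of_ne (by positivity) h.symm
    refine ⟨t / √(s ^ 2 + t ^ 2), -s / √(s ^ 2 + t ^ 2), ?_, by ring⟩
    rw [div_pow, div_pow, neg_sq, Real.sq_sqrt hpos.le]
    field_simp
    ring

section Eigenvectors

variable {n : ℕ} {A : Matrix (Fin n) (Fin n) ℝ}

lemma abs_le_rspecNorm_sub_smul_vecMulVec {p q : Fin n → ℝ} {α β : ℝ} (hp : A *ᵥ p = α • p)
    (hq : A *ᵥ q = β • q) (hpp : p ⬝ᵥ p = 1) (hqq : q ⬝ᵥ q = 1) (hpq : p ⬝ᵥ q = 0)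
    (hβα : |β| ≤ |α|) (c : ℝ) (u : Fin n → ℝ) : |β| ≤ rspecNorm (A - c • vecMulVec u u) := by
  obtain ⟨a, b, hab, hu⟩ := exists_sq_add_sq_eq_one_and_mul_add_mul_eq_zero (u ⬝ᵥ p) (u ⬝ᵥ q)
  set x := a • p + b • q
  have hqp : q ⬝ᵥ p = 0 := by rw [dotProduct_comm, hpq]
  have hx : x ⬝ᵥ x = 1 := by
    simp only [x, dotProduct_add, add_dotProduct, dotProduct_smul, smul_dotProduct, smul_eq_mul,
      hpp, hqq, hpq, hqp]
    linarith
  have hBx : (A - c • vecMulVec u u) *ᵥ x = (a * α) • p + (b * β) • q := by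
    have hux : u ⬝ᵥ x = 0 := by
      simp only [x, dotProduct_add, dotProduct_smul, smul_eq_mul]
      linarith
    rw [sub_mulVec, smul_mulVec, vecMulVec_mulVec, hux, MulOpposite.op_zero, zero_smul, smul_zero,
      sub_zero]
    simp only [x, mulVec_add, mulVec_smul, hp, hq, smul_smul]
  have hsq : β ^ 2 ≤ α ^ 2 := sq_le_sq.mpr hβα
  have hBxx : β ^ 2 ≤ (A - c • vecMulVec u u) *ᵥ x ⬝ᵥ (A - c • vecMulVec u u) *ᵥ x := by
    simp only [hBx, dotProduct_add, add_dotProduct, dotProduct_smul, smul_dotProduct, smul_eq_mul,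
      hpp, hqq, hpq, hqp]
    nlinarith [mul_le_mul_of_nonneg_left hsq (sq_nonneg a)]
  have hxn : rvnorm x = 1 := by rw [rvnorm_eq_sqrt_dotProduct, hx, Real.sqrt_one]
  calc |β| = √(β ^ 2) := (Real.sqrt_sq_eq_abs β).symm
    _ ≤ rvnorm ((A - c • vecMulVec u u) *ᵥ x) := by
      rw [rvnorm_eq_sqrt_dotProduct]; exact Real.sqrt_le_sqrt hBxx
    _ ≤ rspecNorm (A - c • vecMulVec u u) := rvnorm_mulVec_le_rspecNorm _ hxn

end Eigenvectors

section HankelVector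

variable {N : ℕ}

lemma sum_pow_two_mul_pos (hN : 0 < N) (z : ℝ) : 0 < ∑ j : Fin N, z ^ (2 * (j : ℕ)) :=
  sum_pos' (fun j _ => by rw [pow_mul]; positivity) ⟨⟨0, hN⟩, mem_univ _, by simp⟩

lemma dotProduct_rzvec (y : Fin N → ℝ) (z : ℝ) :
    y ⬝ᵥ rzvec N z = (√(∑ j : Fin N, z ^ (2 * (j : ℕ))))⁻¹ * ∑ k : Fin N, y k * z ^ (k : ℕ) := by
  simp only [dotProduct, rzvec, mul_sum]
  exact sum_congr rfl fun k _ => by ring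

lemma rzvec_dotProduct_rzvec (hN : 0 < N) (z : ℝ) : rzvec N z ⬝ᵥ rzvec N z = 1 := by
  have hS := sum_pow_two_mul_pos hN z
  simp only [dotProduct, rzvec]
  set S := ∑ j : Fin N, z ^ (2 * (j : ℕ))
  rw [sum_congr rfl fun (k : Fin N) _ => show (√S)⁻¹ * z ^ (k : ℕ) * ((√S)⁻¹ * z ^ (k : ℕ)) =
    (√S)⁻¹ ^ 2 * z ^ (2 * (k : ℕ)) by ring, ← mul_sum, inv_pow, Real.sq_sqrt hS.le,
    inv_mul_cancel₀ hS.ne']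

lemma exists_dotProduct_rzvec_ne_zero {y : Fin N → ℝ} (hy : y ≠ 0) :
    ∃ z, y ⬝ᵥ rzvec N z ≠ 0 := by
  obtain ⟨k, hk⟩ := Function.ne_iff.mp hy
  set p : Polynomial ℝ := ∑ j : Fin N, Polynomial.monomial j (y j)
  have hp : p ≠ 0 := fun h => hk (by simpa [p, Polynomial.finsetSum_coeff,
    Polynomial.coeff_monomial, Fin.val_inj] using congrArg (Polynomial.coeff · k) h)
  obtain ⟨z, hz⟩ : ∃ z, p.eval z ≠ 0 := by
    by_contra! h
    exact hp (Polynomial.funext (q := 0) (by simpa using h))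
  refine ⟨z, ?_⟩
  rw [dotProduct_rzvec]
  refine mul_ne_zero (inv_ne_zero (Real.sqrt_pos.mpr (sum_pow_two_mul_pos k.pos z)).ne') ?_
  simpa [p, Polynomial.eval_finsetSum] using hz

end HankelVector

/-- The optimal rank-1 Hankel approximation error (in the spectral norm) of a
real symmetric matrix with simple largest singular value satisfies
`|λ₁| ≤ λ̃ < λ₀`. -/
theorem stmt11 (N : ℕ) (hN : 2 ≤ N) (A : Matrix (Fin N) (Fin N) ℝ)
    (hsymm : A.IsSymm)
    (lam : Fin N → ℝ) (v : Fin N → Fin N → ℝ)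
    (heig : ∀ i, A.mulVec (v i) = lam i • v i)
    (horth : ∀ i j, v i ⬝ᵥ v j = if i = j then (1 : ℝ) else 0)
    (hord : ∀ i j : Fin N, i ≤ j → |lam j| ≤ |lam i|)
    (hgap : |lam ⟨1, by omega⟩| < lam ⟨0, by omega⟩) :
    |lam ⟨1, by omega⟩| ≤
        sInf {r : ℝ |
          (∃ c z : ℝ, r = rspecNorm (A - c • vecMulVec (rzvec N z) (rzvec N z))) ∨
          (∃ c : ℝ, r = rspecNorm (A - c • vecMulVec (revec N) (revec N)))} ∧
      sInf {r : ℝ |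
          (∃ c z : ℝ, r = rspecNorm (A - c • vecMulVec (rzvec N z) (rzvec N z))) ∨
          (∃ c : ℝ, r = rspecNorm (A - c • vecMulVec (revec N) (revec N)))} <
        lam ⟨0, by omega⟩ := by
  set i₀ : Fin N := ⟨0, by omega⟩
  set i₁ : Fin N := ⟨1, by omega⟩
  have hv : ∀ i, v i ⬝ᵥ v i = 1 := fun i => by simp [horth]
  set S : Set ℝ := {r : ℝ |
      (∃ c z : ℝ, r = rspecNorm (A - c • vecMulVec (rzvec N z) (rzvec N z))) ∨
      (∃ c : ℝ, r = rspecNorm (A - c • vecMulVec (revec N) (revec N)))}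
  have hlower : ∀ r ∈ S, |lam i₁| ≤ r := by
    have h01 : v i₀ ⬝ᵥ v i₁ = 0 := by simp [horth, i₀, i₁]
    have h10 : |lam i₁| ≤ |lam i₀| := hord i₀ i₁ (by simp [Fin.le_def, i₀, i₁])
    rintro r (⟨c, z, rfl⟩ | ⟨c, rfl⟩) <;>
      exact abs_le_rspecNorm_sub_smul_vecMulVec (heig i₀) (heig i₁) (hv i₀) (hv i₁) h01 h10 c _
  refine ⟨le_csInf ⟨_, Or.inr ⟨0, rfl⟩⟩ hlower, ?_⟩
  have hμ : ∀ i ≠ i₀, |lam i| ≤ |lam i₁| := fun i hi =>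
    hord i₁ i (Fin.le_def.mpr (Nat.one_le_iff_ne_zero.mpr fun h => hi (Fin.ext h)))
  obtain ⟨z, hz⟩ := exists_dotProduct_rzvec_ne_zero (y := v i₀) fun h =>
    zero_ne_one (by rw [← hv i₀, h, zero_dotProduct])
  obtain ⟨ε, hε⟩ := exists_rspecNorm_sub_smul_vecMulVec_lt hsymm heig horth i₀ (abs_nonneg _) hμ
    hgap (rzvec_dotProduct_rzvec (by omega) z) hz
  exact (csInf_le ⟨_, hlower⟩ (Or.inl ⟨ε, z, rfl⟩)).trans_lt hε
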